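/- arXiv:2007.07695 — 3 statements merged into one kernel-verified Lean document; each statement's English description precedes it below -/
import Mathlib

section
/- Under the ideal cluster assumption (A_{ij} = 0 whenever y_i ≠ y_j), let m and p be distinct indices with p ≤ l (p labeled), y_m = y_p, and A_{mp} = 0, and let ε > 0. Define A' to be equal to A except that A'_{mp} = A'_{pm} = ε. Then A' is again symmetric with nonnegative entries, zero diagonal, and positive row sums, A' satisfies the ideal cluster assumption, and the accuracy computed from A' is at least the accuracy computed from A, i.e., Acc(A') ≥ Acc(A). -/
open Matrix BigOperators Finset

attribute [local instance] Classical.propDecidable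

/-- Row sum `d_i = Σ_j A_{ij}` of the affinity matrix. -/
noncomputable def rowSum {n : ℕ} (A : Matrix (Fin n) (Fin n) ℝ) (i : Fin n) : ℝ :=
  ∑ j, A i j

/-- The normalized matrix `S = D^{-1/2} A D^{-1/2}`. -/
noncomputable def Smat {n : ℕ} (A : Matrix (Fin n) (Fin n) ℝ) : Matrix (Fin n) (Fin n) ℝ :=
  Matrix.diagonal (fun i => (Real.sqrt (rowSum A i))⁻¹) * A *
    Matrix.diagonal (fun i => (Real.sqrt (rowSum A i))⁻¹)

/-- Label matrix `Y` (indices `i` with `(i : ℕ) < l` are the labeled ones). -/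
noncomputable def Ymat {n K : ℕ} (l : ℕ) (y : Fin n → Fin K) : Matrix (Fin n) (Fin K) ℝ :=
  fun i c => if (i : ℕ) < l ∧ y i = c then 1 else 0

/-- `F* = (I - α S)^{-1} Y`. -/
noncomputable def Fstar {n K : ℕ} (l : ℕ) (y : Fin n → Fin K) (α : ℝ)
    (A : Matrix (Fin n) (Fin n) ℝ) : Matrix (Fin n) (Fin K) ℝ :=
  (1 - α • Smat A)⁻¹ * Ymat l y

/-- Instance `i` is correctly predicted: `F*_{i, y_i} > F*_{i, c}` for all `c ≠ y_i`. -/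
def CorrectlyPredicted {n K : ℕ} (l : ℕ) (y : Fin n → Fin K) (α : ℝ)
    (A : Matrix (Fin n) (Fin n) ℝ) (i : Fin n) : Prop :=
  ∀ c : Fin K, c ≠ y i → Fstar l y α A i c < Fstar l y α A i (y i)

/-- Accuracy on the unlabeled instances (those with `(i : ℕ) ≥ l`). -/
noncomputable def AccLP {n K : ℕ} (l : ℕ) (y : Fin n → Fin K) (α : ℝ)
    (A : Matrix (Fin n) (Fin n) ℝ) : ℝ :=
  ((Finset.univ.filter
      (fun i : Fin n => l ≤ (i : ℕ) ∧ CorrectlyPredicted l y α A i)).card : ℝ) /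
    ((n : ℝ) - (l : ℝ))

/-- `i` and `j` are connected w.r.t. `B`: a finite sequence of at least one step
with positive affinities joins them. -/
def Connected {n : ℕ} (B : Matrix (Fin n) (Fin n) ℝ) : Fin n → Fin n → Prop :=
  Relation.TransGen (fun i j => 0 < B i j)

/-!
Under the ideal cluster assumption the predictions only depend on which entries of `A` are
positive. Indeed `I - αS` is conjugate, by the positive diagonal matrix `D^{1/2}`, to `I - αP`
with `P = D⁻¹A`, and `(I - αP)⁻¹ = Σ (αP)^k` converges because `αP` has row sums `α < 1`.
Hence `(I - αS)⁻¹` is nonnegative, with `(i, j)` entry positive iff `j` is reachable from `i`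
along positive affinities. Reachability stays inside a class, so `F*_{i,c} = 0` for `c ≠ y_i`,
and `i` is correctly predicted iff it reaches a labeled instance of its own class. Adding an
edge only enlarges reachability, so no correctly predicted instance is lost.
-/

open Relation

theorem HasSum.pos_iff_exists_pos {ι : Type*} {f : ι → ℝ} {a : ℝ} (hf : HasSum f a)
    (h0 : ∀ k, 0 ≤ f k) : 0 < a ↔ ∃ k, 0 < f k := by
  constructor
  · intro ha
    by_contra! h
    have hzero : f = 0 := funext fun k => le_antisymm (h k) (h0 k)
    exact ha.ne' (hf.unique (hzero ▸ hasSum_zero))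
  · rintro ⟨k, hk⟩
    exact hf.tsum_eq ▸ hf.summable.tsum_pos h0 k hk

section Positivity

variable {m ι κ : Type*} [Fintype ι]

theorem Matrix.mul_apply_nonneg {M : Matrix m ι ℝ} {N : Matrix ι κ ℝ}
    (hM : ∀ a j, 0 ≤ M a j) (hN : ∀ j c, 0 ≤ N j c) (a : m) (c : κ) : 0 ≤ (M * N) a c :=
  Finset.sum_nonneg fun j _ => mul_nonneg (hM a j) (hN j c)

theorem Matrix.mul_apply_pos_iff {M : Matrix m ι ℝ} {N : Matrix ι κ ℝ}
    (hM : ∀ a j, 0 ≤ M a j) (hN : ∀ j c, 0 ≤ N j c) (a : m) (c : κ) :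
    0 < (M * N) a c ↔ ∃ j, 0 < M a j ∧ 0 < N j c := by
  rw [Matrix.mul_apply, Finset.sum_pos_iff_of_nonneg fun j _ => mul_nonneg (hM a j) (hN j c)]
  simp only [Finset.mem_univ, true_and]
  refine exists_congr fun j => ⟨fun h => ?_, fun h => mul_pos h.1 h.2⟩
  exact (pos_and_pos_or_neg_and_neg_of_mul_pos h).resolve_right fun h' => (hM a j).not_gt h'.1

variable [DecidableEq ι] {M : Matrix ι ι ℝ}

theorem Matrix.exists_pow_apply_pos_iff (hM : ∀ i j, 0 ≤ M i j) {i j : ι} :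
    (∃ k, 0 < (M ^ k) i j) ↔ ReflTransGen (fun a b => 0 < M a b) i j := by
  constructor
  · rintro ⟨k, hk⟩
    induction k generalizing j with
    | zero =>
      rw [pow_zero, Matrix.one_apply] at hk
      split_ifs at hk with hij
      · exact hij ▸ ReflTransGen.refl
      · exact absurd hk (lt_irrefl 0)
    | succ k ih =>
      rw [pow_succ, Matrix.mul_apply_pos_iff (Matrix.pow_apply_nonneg hM k) hM] at hk
      obtain ⟨t, hit, htj⟩ := hk
      exact (ih hit).tail htj
  · intro h
    induction h with
    | refl => exact ⟨0, by simp⟩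
    | tail _ hbc ih =>
      obtain ⟨k, hk⟩ := ih
      refine ⟨k + 1, ?_⟩
      rw [pow_succ, Matrix.mul_apply_pos_iff (Matrix.pow_apply_nonneg hM k) hM]
      exact ⟨_, hk, hbc⟩

end Positivity

section Neumann

attribute [local instance] Matrix.linftyOpNormedRing Matrix.linftyOpNormedAlgebra

variable {ι : Type*} [Fintype ι] [DecidableEq ι] {M : Matrix ι ι ℝ}

theorem Matrix.linfty_opNorm_lt_one (hM : ∀ i j, 0 ≤ M i j) (hrow : ∀ i, ∑ j, M i j < 1) :
    ‖M‖ < 1 := by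
  rw [Matrix.linfty_opNorm_def, ← NNReal.coe_one, NNReal.coe_lt_coe,
    Finset.sup_lt_iff zero_lt_one]
  intro i _
  rw [← NNReal.coe_lt_coe, NNReal.coe_sum]
  simpa only [coe_nnnorm, NNReal.coe_one, Real.norm_of_nonneg (hM i _)] using hrow i

theorem Matrix.hasSum_pow_apply_inv_one_sub (hM : ∀ i j, 0 ≤ M i j)
    (hrow : ∀ i, ∑ j, M i j < 1) (i j : ι) :
    HasSum (fun k => (M ^ k) i j) ((1 - M)⁻¹ i j) := by
  have hnorm := Matrix.linfty_opNorm_lt_one hM hrow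
  have hsum := (summable_geometric_of_norm_lt_one hnorm).hasSum
  rw [← Matrix.inv_eq_left_inv (geom_series_mul_neg M hnorm)] at hsum
  exact Pi.hasSum.1 (Pi.hasSum.1 hsum i) j

theorem Matrix.inv_one_sub_apply_nonneg (hM : ∀ i j, 0 ≤ M i j)
    (hrow : ∀ i, ∑ j, M i j < 1) (i j : ι) : 0 ≤ (1 - M)⁻¹ i j :=
  (Matrix.hasSum_pow_apply_inv_one_sub hM hrow i j).nonneg
    fun k => Matrix.pow_apply_nonneg hM k i j

theorem Matrix.inv_one_sub_apply_pos_iff (hM : ∀ i j, 0 ≤ M i j)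
    (hrow : ∀ i, ∑ j, M i j < 1) (i j : ι) :
    0 < (1 - M)⁻¹ i j ↔ ReflTransGen (fun a b => 0 < M a b) i j := by
  rw [(Matrix.hasSum_pow_apply_inv_one_sub hM hrow i j).pos_iff_exists_pos
    fun k => Matrix.pow_apply_nonneg hM k i j]
  exact Matrix.exists_pow_apply_pos_iff hM

end Neumann

theorem Matrix.inv_conj_eq_conj_inv {ι R : Type*} [Fintype ι] [DecidableEq ι] [CommRing R]
    {E E' X : Matrix ι ι R} (h : E * E' = 1) : (E * X * E')⁻¹ = E * X⁻¹ * E' := by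
  rw [Matrix.mul_inv_rev, Matrix.mul_inv_rev, Matrix.inv_eq_left_inv h, Matrix.inv_eq_right_inv h,
    Matrix.mul_assoc]

theorem label_eq_of_reflTransGen {ι κ : Type*} {A : Matrix ι ι ℝ} {y : ι → κ}
    (hcluster : ∀ i j, y i ≠ y j → A i j = 0) {i j : ι}
    (h : ReflTransGen (fun a b => 0 < A a b) i j) : y i = y j := by
  induction h with
  | refl => rfl
  | tail _ hbc ih => exact ih.trans (by_contra fun hne => hbc.ne' (hcluster _ _ hne))

section LabelPropagation

variable {n : ℕ} {A : Matrix (Fin n) (Fin n) ℝ} {α : ℝ}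

noncomputable def transitionMatrix (A : Matrix (Fin n) (Fin n) ℝ) : Matrix (Fin n) (Fin n) ℝ :=
  fun i j => A i j / rowSum A i

theorem smul_transitionMatrix_nonneg (hnonneg : ∀ i j, 0 ≤ A i j) (hrow : ∀ i, 0 < rowSum A i)
    (hα : 0 ≤ α) (i j : Fin n) : 0 ≤ (α • transitionMatrix A) i j :=
  mul_nonneg hα (div_nonneg (hnonneg i j) (hrow i).le)

theorem sum_smul_transitionMatrix (hrow : ∀ i, 0 < rowSum A i) (i : Fin n) :
    ∑ j, (α • transitionMatrix A) i j = α := by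
  simp only [Matrix.smul_apply, transitionMatrix, smul_eq_mul, ← Finset.mul_sum, ← Finset.sum_div]
  rw [← rowSum, div_self (hrow i).ne', mul_one]

theorem smul_transitionMatrix_pos_iff (hrow : ∀ i, 0 < rowSum A i) (hα : 0 < α) (i j : Fin n) :
    0 < (α • transitionMatrix A) i j ↔ 0 < A i j := by
  rw [Matrix.smul_apply, smul_eq_mul, mul_pos_iff_of_pos_left hα, transitionMatrix,
    div_pos_iff_of_pos_right (hrow i)]

theorem Smat_eq_conj_transitionMatrix (A : Matrix (Fin n) (Fin n) ℝ) :
    Smat A = diagonal (fun i => √(rowSum A i)) * transitionMatrix A *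
      diagonal (fun i => (√(rowSum A i))⁻¹) := by
  ext i j
  simp only [Smat, transitionMatrix, mul_diagonal, diagonal_mul]
  rw [mul_div_left_comm, Real.sqrt_div_self', one_div, mul_comm (A i j)]

theorem inv_one_sub_smul_Smat (hrow : ∀ i, 0 < rowSum A i) :
    (1 - α • Smat A)⁻¹ = diagonal (fun i => √(rowSum A i)) *
      (1 - α • transitionMatrix A)⁻¹ * diagonal (fun i => (√(rowSum A i))⁻¹) := by
  have hE : diagonal (fun i => √(rowSum A i)) * diagonal (fun i => (√(rowSum A i))⁻¹) = 1 := by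
    rw [diagonal_mul_diagonal, ← diagonal_one]
    exact congrArg diagonal (funext fun i => mul_inv_cancel₀ (Real.sqrt_pos.2 (hrow i)).ne')
  rw [← Matrix.inv_conj_eq_conj_inv hE, Matrix.mul_sub, Matrix.sub_mul, Matrix.mul_one, hE,
    Matrix.mul_smul, Matrix.smul_mul, ← Smat_eq_conj_transitionMatrix]

theorem inv_one_sub_smul_Smat_apply_nonneg (hnonneg : ∀ i j, 0 ≤ A i j)
    (hrow : ∀ i, 0 < rowSum A i) (hα0 : 0 ≤ α) (hα1 : α < 1) (i j : Fin n) :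
    0 ≤ (1 - α • Smat A)⁻¹ i j := by
  rw [inv_one_sub_smul_Smat hrow, mul_diagonal, diagonal_mul]
  have hG := Matrix.inv_one_sub_apply_nonneg (smul_transitionMatrix_nonneg hnonneg hrow hα0)
    (fun i => (sum_smul_transitionMatrix hrow i).trans_lt hα1) i j
  positivity

theorem inv_one_sub_smul_Smat_apply_pos_iff (hnonneg : ∀ i j, 0 ≤ A i j)
    (hrow : ∀ i, 0 < rowSum A i) (hα0 : 0 < α) (hα1 : α < 1) (i j : Fin n) :
    0 < (1 - α • Smat A)⁻¹ i j ↔ ReflTransGen (fun a b => 0 < A a b) i j := by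
  rw [inv_one_sub_smul_Smat hrow, mul_diagonal, diagonal_mul,
    mul_pos_iff_of_pos_right (inv_pos.2 (Real.sqrt_pos.2 (hrow j))),
    mul_pos_iff_of_pos_left (Real.sqrt_pos.2 (hrow i)),
    Matrix.inv_one_sub_apply_pos_iff (smul_transitionMatrix_nonneg hnonneg hrow hα0.le)
      (fun i => (sum_smul_transitionMatrix hrow i).trans_lt hα1)]
  simp only [smul_transitionMatrix_pos_iff hrow hα0]

end LabelPropagation

section Prediction

variable {n K : ℕ} {l : ℕ} {y : Fin n → Fin K} {α : ℝ}

theorem Ymat_nonneg (j : Fin n) (c : Fin K) : 0 ≤ Ymat l y j c := by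
  unfold Ymat
  split_ifs <;> norm_num

theorem Ymat_pos_iff (j : Fin n) (c : Fin K) : 0 < Ymat l y j c ↔ (j : ℕ) < l ∧ y j = c := by
  unfold Ymat
  split_ifs with h <;> simp [h]

variable {A A' : Matrix (Fin n) (Fin n) ℝ}

theorem Fstar_nonneg (hnonneg : ∀ i j, 0 ≤ A i j) (hrow : ∀ i, 0 < rowSum A i) (hα0 : 0 ≤ α)
    (hα1 : α < 1) (i : Fin n) (c : Fin K) : 0 ≤ Fstar l y α A i c :=
  Matrix.mul_apply_nonneg (inv_one_sub_smul_Smat_apply_nonneg hnonneg hrow hα0 hα1) Ymat_nonneg i c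

theorem Fstar_pos_iff (hnonneg : ∀ i j, 0 ≤ A i j) (hrow : ∀ i, 0 < rowSum A i) (hα0 : 0 < α)
    (hα1 : α < 1) (i : Fin n) (c : Fin K) :
    0 < Fstar l y α A i c ↔
      ∃ j, ReflTransGen (fun a b => 0 < A a b) i j ∧ (j : ℕ) < l ∧ y j = c := by
  rw [Fstar, Matrix.mul_apply_pos_iff (inv_one_sub_smul_Smat_apply_nonneg hnonneg hrow hα0.le hα1)
    Ymat_nonneg]
  simp only [inv_one_sub_smul_Smat_apply_pos_iff hnonneg hrow hα0 hα1, Ymat_pos_iff]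

theorem Fstar_eq_zero_of_ne (hnonneg : ∀ i j, 0 ≤ A i j) (hrow : ∀ i, 0 < rowSum A i)
    (hα0 : 0 < α) (hα1 : α < 1) (hcluster : ∀ i j, y i ≠ y j → A i j = 0) {i : Fin n}
    {c : Fin K} (hc : c ≠ y i) : Fstar l y α A i c = 0 := by
  refine le_antisymm (not_lt.1 fun hpos => ?_) (Fstar_nonneg hnonneg hrow hα0.le hα1 i c)
  obtain ⟨j, hij, -, rfl⟩ := (Fstar_pos_iff hnonneg hrow hα0 hα1 i c).1 hpos
  exact hc (label_eq_of_reflTransGen hcluster hij).symm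

theorem CorrectlyPredicted.mono (hα0 : 0 < α) (hα1 : α < 1) (hnonneg : ∀ i j, 0 ≤ A i j)
    (hrow : ∀ i, 0 < rowSum A i) (hnonneg' : ∀ i j, 0 ≤ A' i j) (hrow' : ∀ i, 0 < rowSum A' i)
    (hcluster' : ∀ i j, y i ≠ y j → A' i j = 0) (hsupp : ∀ i j, 0 < A i j → 0 < A' i j)
    {i : Fin n} (h : CorrectlyPredicted l y α A i) : CorrectlyPredicted l y α A' i := by
  intro c hc
  rw [Fstar_eq_zero_of_ne hnonneg' hrow' hα0 hα1 hcluster' hc]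
  have hpos := (Fstar_nonneg hnonneg hrow hα0.le hα1 i c).trans_lt (h c hc)
  obtain ⟨j, hij, hjl, hjy⟩ := (Fstar_pos_iff hnonneg hrow hα0 hα1 i (y i)).1 hpos
  exact (Fstar_pos_iff hnonneg' hrow' hα0 hα1 i (y i)).2
    ⟨j, ReflTransGen.mono hsupp _ _ hij, hjl, hjy⟩

theorem AccLP_mono (hln : l < n)
    (h : ∀ i, CorrectlyPredicted l y α A i → CorrectlyPredicted l y α A' i) :
    AccLP l y α A ≤ AccLP l y α A' := by
  have hden : (0 : ℝ) ≤ n - l := sub_nonneg.2 (by exact_mod_cast hln.le)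
  unfold AccLP
  gcongr with i
  exact h i

end Prediction

theorem rowSum_pos_of_support_subset {n : ℕ} {A A' : Matrix (Fin n) (Fin n) ℝ}
    (hnonneg' : ∀ i j, 0 ≤ A' i j) (hsupp : ∀ i j, 0 < A i j → 0 < A' i j) {i : Fin n}
    (hrow : 0 < rowSum A i) : 0 < rowSum A' i := by
  obtain ⟨j, hj⟩ : ∃ j, 0 < A i j := by
    by_contra! h
    exact (Finset.sum_nonpos fun j _ => h j).not_gt hrow
  exact Finset.sum_pos' (fun j _ => hnonneg' i j) ⟨j, Finset.mem_univ j, hsupp i j hj⟩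

section SetEdge

variable {n : ℕ} {A : Matrix (Fin n) (Fin n) ℝ} {m p : Fin n} {ε : ℝ}

def setEdge (A : Matrix (Fin n) (Fin n) ℝ) (m p : Fin n) (ε : ℝ) : Matrix (Fin n) (Fin n) ℝ :=
  fun i j => if (i = m ∧ j = p) ∨ (i = p ∧ j = m) then ε else A i j

theorem setEdge_isSymm (hsym : A.IsSymm) : (setEdge A m p ε).IsSymm := by
  refine Matrix.IsSymm.ext fun i j => ?_
  unfold setEdge
  rw [hsym.apply]
  congr 1
  simp only [eq_iff_iff]
  tauto

theorem setEdge_nonneg (hnonneg : ∀ i j, 0 ≤ A i j) (hε : 0 ≤ ε) (i j : Fin n) :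
    0 ≤ setEdge A m p ε i j := by
  unfold setEdge
  split_ifs
  exacts [hε, hnonneg i j]

theorem setEdge_apply_self (hmp : m ≠ p) (i : Fin n) : setEdge A m p ε i i = A i i :=
  if_neg (by rintro (⟨rfl, rfl⟩ | ⟨rfl, rfl⟩) <;> exact hmp rfl)

theorem setEdge_pos_of_pos (hε : 0 < ε) {i j : Fin n} (h : 0 < A i j) :
    0 < setEdge A m p ε i j := by
  unfold setEdge
  split_ifs
  exacts [hε, h]

theorem setEdge_eq_zero_of_label_ne {K : ℕ} {y : Fin n → Fin K}
    (hcluster : ∀ i j, y i ≠ y j → A i j = 0) (hy : y m = y p) {i j : Fin n} (hij : y i ≠ y j) :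
    setEdge A m p ε i j = 0 := by
  unfold setEdge
  split_ifs with h
  · rcases h with ⟨rfl, rfl⟩ | ⟨rfl, rfl⟩
    exacts [absurd hy hij, absurd hy.symm hij]
  · exact hcluster i j hij

end SetEdge

theorem lp_augment_acc_nondecreasing_general
    {n K : ℕ} (l : ℕ) (hln : l < n)
    (y : Fin n → Fin K) (α : ℝ) (hα0 : 0 < α) (hα1 : α < 1)
    (A A' : Matrix (Fin n) (Fin n) ℝ)
    (hsym : A.IsSymm) (hnonneg : ∀ i j, 0 ≤ A i j) (hdiag : ∀ i, A i i = 0)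
    (hrow : ∀ i, 0 < rowSum A i)
    (hcluster : ∀ i j, y i ≠ y j → A i j = 0)
    (m p : Fin n) (hmp : m ≠ p) (hy : y m = y p)
    (ε : ℝ) (hε : 0 < ε)
    (hA' : ∀ i j, A' i j = if (i = m ∧ j = p) ∨ (i = p ∧ j = m) then ε else A i j) :
    A'.IsSymm ∧ (∀ i j, 0 ≤ A' i j) ∧ (∀ i, A' i i = 0) ∧
      (∀ i, 0 < rowSum A' i) ∧ (∀ i j, y i ≠ y j → A' i j = 0) ∧
      AccLP l y α A ≤ AccLP l y α A' := by
  obtain rfl : A' = setEdge A m p ε := Matrix.ext hA'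
  have hnonneg' := setEdge_nonneg (m := m) (p := p) hnonneg hε.le
  have hsupp : ∀ i j, 0 < A i j → 0 < setEdge A m p ε i j := fun _ _ => setEdge_pos_of_pos hε
  have hrow' : ∀ i, 0 < rowSum (setEdge A m p ε) i :=
    fun i => rowSum_pos_of_support_subset hnonneg' hsupp (hrow i)
  have hcluster' : ∀ i j, y i ≠ y j → setEdge A m p ε i j = 0 :=
    fun _ _ => setEdge_eq_zero_of_label_ne hcluster hy
  refine ⟨setEdge_isSymm hsym, hnonneg', fun i => (setEdge_apply_self hmp i).trans (hdiag i),
    hrow', hcluster', AccLP_mono hln fun i => ?_⟩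
  exact CorrectlyPredicted.mono hα0 hα1 hnonneg hrow hnonneg' hrow' hcluster' hsupp

/-- under the ideal cluster assumption, enhancing a zero-valued affinity
between `m` and a labeled instance `p` of the same true label to `ε > 0` yields a
matrix `A'` that again satisfies all structural assumptions and the ideal cluster
assumption, and the accuracy does not decrease: `Acc(A') ≥ Acc(A)`. -/
theorem lp_augment_acc_nondecreasing
    {n K : ℕ} (l : ℕ) (hl : 0 < l) (hln : l < n) (hK : 0 < K)
    (y : Fin n → Fin K) (α : ℝ) (hα0 : 0 < α) (hα1 : α < 1)
    (A A' : Matrix (Fin n) (Fin n) ℝ)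
    (hsym : A.IsSymm) (hnonneg : ∀ i j, 0 ≤ A i j) (hdiag : ∀ i, A i i = 0)
    (hrow : ∀ i, 0 < rowSum A i)
    (hcluster : ∀ i j, y i ≠ y j → A i j = 0)
    (m p : Fin n) (hmp : m ≠ p) (hp : (p : ℕ) < l) (hy : y m = y p)
    (hAmp : A m p = 0) (ε : ℝ) (hε : 0 < ε)
    (hA' : ∀ i j, A' i j = if (i = m ∧ j = p) ∨ (i = p ∧ j = m) then ε else A i j) :
    A'.IsSymm ∧ (∀ i j, 0 ≤ A' i j) ∧ (∀ i, A' i i = 0) ∧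
      (∀ i, 0 < rowSum A' i) ∧ (∀ i j, y i ≠ y j → A' i j = 0) ∧
      AccLP l y α A ≤ AccLP l y α A' :=
  lp_augment_acc_nondecreasing_general l hln y α hα0 hα1 A A' hsym hnonneg hdiag hrow hcluster m p
    hmp hy ε hε hA'
end

section
/- Under the ideal cluster assumption (A_{ij} = 0 whenever y_i ≠ y_j) and for α ∈ (0,1), if an instance i is connected to some labeled index j ≤ l, then F*_{i,y_i} > 0 and F*_{i,c} = 0 for all c ≠ y_i; in particular i is correctly predicted. -/
open Matrix BigOperators Finset

attribute [local instance] Classical.propDecidable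

section Neumann

attribute [local instance] Matrix.linftyOpNormedAddCommGroup Matrix.linftyOpNormedSpace
  Matrix.linftyOpNormedRing Matrix.linftyOpNormedAlgebra

/-- Neumann-series right inverse of `1 - Q` for an entrywise-nonnegative matrix whose
row sums are less than one, together with the entrywise facts we need. -/
theorem neumann_exists {n : ℕ} (Q : Matrix (Fin n) (Fin n) ℝ)
    (hQnn : ∀ a b, 0 ≤ Q a b) (hrowlt : ∀ a, ∑ b, Q a b < 1) :
    ∃ N : Matrix (Fin n) (Fin n) ℝ, (1 - Q) * N = 1 ∧ (∀ a b, 0 ≤ N a b) ∧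
      (∀ (m : ℕ) (a b : Fin n), (Q ^ m) a b ≤ N a b) ∧
      (∀ a b, (∀ m : ℕ, (Q ^ m) a b = 0) → N a b = 0) := by
  haveI : CompleteSpace (Matrix (Fin n) (Fin n) ℝ) := FiniteDimensional.complete ℝ _
  have hQnorm : ‖Q‖ < 1 := by
    rw [Matrix.linfty_opNorm_def]
    rw [show (1 : ℝ) = ((1 : NNReal) : ℝ) by norm_num, NNReal.coe_lt_coe]
    refine (Finset.sup_lt_iff (by norm_num)).2 fun a _ => ?_
    rw [← NNReal.coe_lt_coe]
    push_cast
    calc ∑ b, ‖Q a b‖ = ∑ b, Q a b :=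
          Finset.sum_congr rfl fun b _ => Real.norm_of_nonneg (hQnn a b)
      _ < 1 := hrowlt a
  have hs : Summable (fun k : ℕ => Q ^ k) := summable_geometric_of_norm_lt_one hQnorm
  have hpow_nn : ∀ (m : ℕ) (a b : Fin n), 0 ≤ (Q ^ m) a b := by
    intro m
    induction m with
    | zero =>
      intro a b
      by_cases h : a = b
      · simp [pow_zero, Matrix.one_apply, h]
      · simp [pow_zero, Matrix.one_apply, h]
    | succ m ih =>
      intro a b
      rw [pow_succ, Matrix.mul_apply]
      exact Finset.sum_nonneg fun t _ => mul_nonneg (ih a t) (hQnn t b)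
  have hentry : ∀ a b : Fin n,
      (∑' k : ℕ, Q ^ k) a b = (∑' k : ℕ, (Q ^ k) a b) ∧
        Summable (fun k : ℕ => (Q ^ k) a b) := by
    intro a b
    let φ : Matrix (Fin n) (Fin n) ℝ →ₗ[ℝ] ℝ :=
      { toFun := fun M => M a b
        map_add' := fun _ _ => rfl
        map_smul' := fun _ _ => rfl }
    let ψ := LinearMap.toContinuousLinearMap φ
    have hmap : HasSum (fun k : ℕ => ψ (Q ^ k)) (ψ (∑' k : ℕ, Q ^ k)) :=
      hs.hasSum.mapL ψ
    exact ⟨hmap.tsum_eq.symm, hmap.summable⟩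
  refine ⟨∑' k : ℕ, Q ^ k, mul_neg_geom_series Q hQnorm, ?_, ?_, ?_⟩
  · intro a b
    rw [(hentry a b).1]
    exact tsum_nonneg fun k => hpow_nn k a b
  · intro m a b
    rw [(hentry a b).1]
    exact Summable.le_tsum (hentry a b).2 m fun k _ => hpow_nn k a b
  · intro a b h
    rw [(hentry a b).1]
    simp [h]

end Neumann

/-- under the ideal cluster assumption, if `i` is connected to some labeled
index, then `F*_{i,y_i} > 0` and `F*_{i,c} = 0` for `c ≠ y_i`; in particular `i` is
correctly predicted. -/
theorem lp_connected_correct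
    {n K : ℕ} (l : ℕ) (hl : 0 < l) (hln : l < n) (hK : 0 < K)
    (y : Fin n → Fin K) (α : ℝ) (hα0 : 0 < α) (hα1 : α < 1)
    (A : Matrix (Fin n) (Fin n) ℝ)
    (hsym : A.IsSymm) (hnonneg : ∀ i j, 0 ≤ A i j) (hdiag : ∀ i, A i i = 0)
    (hrow : ∀ i, 0 < rowSum A i)
    (hcluster : ∀ i j, y i ≠ y j → A i j = 0)
    (i : Fin n) (hconn : ∃ j : Fin n, (j : ℕ) < l ∧ Connected A i j) :
    0 < Fstar l y α A i (y i) ∧ (∀ c : Fin K, c ≠ y i → Fstar l y α A i c = 0) ∧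
      CorrectlyPredicted l y α A i := by
  classical
  set d : Fin n → ℝ := fun j => rowSum A j with hd
  set dh : Fin n → ℝ := fun j => Real.sqrt (d j) with hdh
  have hdhpos : ∀ j, 0 < dh j := fun j => Real.sqrt_pos.2 (hrow j)
  have hdh_ne : ∀ j, dh j ≠ 0 := fun j => (hdhpos j).ne'
  have hdhsq : ∀ j, dh j * dh j = d j := fun j => Real.mul_self_sqrt (hrow j).le
  set Q : Matrix (Fin n) (Fin n) ℝ := α • fun a b => (d a)⁻¹ * A a b with hQdef
  have hQab : ∀ a b, Q a b = α * ((d a)⁻¹ * A a b) := fun a b => rfl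
  have hQnn : ∀ a b, 0 ≤ Q a b := fun a b => by
    rw [hQab]
    exact mul_nonneg hα0.le (mul_nonneg (inv_nonneg.2 (hrow a).le) (hnonneg a b))
  have hrowlt : ∀ a, ∑ b, Q a b < 1 := by
    intro a
    have hsum : ∑ b, Q a b = α := by
      simp only [hQab]
      rw [← Finset.mul_sum, ← Finset.mul_sum,
        show (∑ b, A a b) = d a from rfl, inv_mul_cancel₀ (hrow a).ne', mul_one]
    rw [hsum]; exact hα1
  obtain ⟨N, hNinv, hNnn, hNle, hNzero⟩ := neumann_exists Q hQnn hrowlt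
  -- powers of Q are nonnegative
  have hpow_nn : ∀ (m : ℕ) (a b : Fin n), 0 ≤ (Q ^ m) a b := by
    intro m
    induction m with
    | zero =>
      intro a b
      by_cases h : a = b <;> simp [pow_zero, Matrix.one_apply, h]
    | succ m ih =>
      intro a b
      rw [pow_succ, Matrix.mul_apply]
      exact Finset.sum_nonneg fun t _ => mul_nonneg (ih a t) (hQnn t b)
  -- powers of Q vanish across clusters
  have hQzero : ∀ (m : ℕ) (a b : Fin n), y a ≠ y b → (Q ^ m) a b = 0 := by
    intro m
    induction m with
    | zero =>
      intro a b hy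
      have hab : a ≠ b := fun h => hy (by rw [h])
      simp [pow_zero, Matrix.one_apply_ne hab]
    | succ m ih =>
      intro a b hy
      rw [pow_succ, Matrix.mul_apply]
      apply Finset.sum_eq_zero
      intro t _
      by_cases hyt : y t = y b
      · rw [ih a t (hyt ▸ hy), zero_mul]
      · rw [hQab, hcluster t b hyt, mul_zero, mul_zero, mul_zero]
  -- connectivity preserves labels
  have hlabel : ∀ a b : Fin n, Connected A a b → y a = y b := by
    intro a b h
    induction h with
    | single h' =>
      by_contra hy
      rw [hcluster _ _ hy] at h'
      exact lt_irrefl 0 h'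
    | tail h1 h2 ih =>
      refine ih.trans ?_
      by_contra hy
      rw [hcluster _ _ hy] at h2
      exact lt_irrefl 0 h2
  -- connectivity gives a positive power entry
  have hApos : ∀ a b : Fin n, 0 < A a b → 0 < Q a b := fun a b h => by
    rw [hQab]
    exact mul_pos hα0 (mul_pos (inv_pos.2 (hrow a)) h)
  have hpos : ∀ b : Fin n, Connected A i b → ∃ m : ℕ, 0 < (Q ^ m) i b := by
    intro b h
    induction h with
    | single h' => exact ⟨1, by simpa [pow_one] using hApos _ _ h'⟩
    | tail h1 h2 ih =>
      obtain ⟨m, hm⟩ := ih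
      refine ⟨m + 1, ?_⟩
      rw [pow_succ, Matrix.mul_apply]
      refine Finset.sum_pos' (fun t _ => mul_nonneg (hpow_nn m i t) (hQnn t _)) ?_
      exact ⟨_, Finset.mem_univ _, mul_pos hm (hApos _ _ h2)⟩
  -- factorization of 1 - α S
  have hfactor : 1 - α • Smat A =
      Matrix.diagonal dh * (1 - Q) * Matrix.diagonal (fun j => (dh j)⁻¹) := by
    ext a b
    simp only [Smat, Matrix.sub_apply, Matrix.smul_apply, Matrix.one_apply,
      Matrix.mul_diagonal, Matrix.diagonal_mul, smul_eq_mul, hQab]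
    have hdhrw : ∀ j, (Real.sqrt (rowSum A j))⁻¹ = (dh j)⁻¹ := fun j => rfl
    by_cases hab : a = b
    · subst hab
      simp [hdiag a, mul_inv_cancel₀ (hdh_ne a)]
    · simp only [if_neg hab, hdhrw]
      rw [← hdhsq a, mul_inv]
      linear_combination (α * A a b * (dh a)⁻¹ * (dh b)⁻¹) * mul_inv_cancel₀ (hdh_ne a)
  have hDD : Matrix.diagonal (fun j => (dh j)⁻¹) * Matrix.diagonal dh
      = (1 : Matrix (Fin n) (Fin n) ℝ) := by
    rw [Matrix.diagonal_mul_diagonal,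
      show (fun j => (dh j)⁻¹ * dh j) = fun _ : Fin n => (1 : ℝ) from
        funext fun j => inv_mul_cancel₀ (hdh_ne j),
      Matrix.diagonal_one]
  have hDD' : Matrix.diagonal dh * Matrix.diagonal (fun j => (dh j)⁻¹)
      = (1 : Matrix (Fin n) (Fin n) ℝ) := by
    rw [Matrix.diagonal_mul_diagonal,
      show (fun j => dh j * (dh j)⁻¹) = fun _ : Fin n => (1 : ℝ) from
        funext fun j => mul_inv_cancel₀ (hdh_ne j),
      Matrix.diagonal_one]
  have hright : (1 - α • Smat A) *
      (Matrix.diagonal dh * N * Matrix.diagonal (fun j => (dh j)⁻¹)) = 1 := by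
    rw [hfactor]
    calc Matrix.diagonal dh * (1 - Q) * Matrix.diagonal (fun j => (dh j)⁻¹) *
          (Matrix.diagonal dh * N * Matrix.diagonal (fun j => (dh j)⁻¹))
        = Matrix.diagonal dh * ((1 - Q) * ((Matrix.diagonal (fun j => (dh j)⁻¹) *
            Matrix.diagonal dh) * (N * Matrix.diagonal (fun j => (dh j)⁻¹)))) := by
          simp only [Matrix.mul_assoc]
      _ = Matrix.diagonal dh * (((1 - Q) * N) * Matrix.diagonal (fun j => (dh j)⁻¹)) := by
          rw [hDD, Matrix.one_mul, Matrix.mul_assoc]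
      _ = 1 := by rw [hNinv, Matrix.one_mul, hDD']
  have hinv : (1 - α • Smat A)⁻¹ = Matrix.diagonal dh * N * Matrix.diagonal (fun j => (dh j)⁻¹) :=
    Matrix.inv_eq_right_inv hright
  have hFentry : ∀ c : Fin K,
      Fstar l y α A i c = ∑ j, dh i * N i j * (dh j)⁻¹ * Ymat l y j c := by
    intro c
    rw [Fstar, hinv, Matrix.mul_apply]
    exact Finset.sum_congr rfl fun j _ => by rw [Matrix.mul_diagonal, Matrix.diagonal_mul]
  have hzero : ∀ c : Fin K, c ≠ y i → Fstar l y α A i c = 0 := by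
    intro c hc
    rw [hFentry c]
    apply Finset.sum_eq_zero
    intro j _
    by_cases hYj : (j : ℕ) < l ∧ y j = c
    · have hyij : y i ≠ y j := fun h => hc (by rw [← hYj.2, ← h])
      have hNij : N i j = 0 := hNzero i j fun m => hQzero m i j hyij
      simp [hNij]
    · simp [Ymat, hYj]
  obtain ⟨j0, hj0l, hj0c⟩ := hconn
  have hyj0 : y j0 = y i := (hlabel i j0 hj0c).symm
  obtain ⟨m, hm⟩ := hpos j0 hj0c
  have hNpos : 0 < N i j0 := lt_of_lt_of_le hm (hNle m i j0)
  have hposF : 0 < Fstar l y α A i (y i) := by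
    rw [hFentry (y i)]
    apply Finset.sum_pos'
    · intro j _
      have hY : (0 : ℝ) ≤ Ymat l y j (y i) := by
        unfold Ymat; split_ifs <;> norm_num
      exact mul_nonneg (mul_nonneg (mul_nonneg (hdhpos i).le (hNnn i j))
        (inv_nonneg.2 (hdhpos j).le)) hY
    · refine ⟨j0, Finset.mem_univ j0, ?_⟩
      have hY : Ymat l y j0 (y i) = 1 := by
        unfold Ymat; rw [if_pos ⟨hj0l, hyj0⟩]
      rw [hY, mul_one]
      exact mul_pos (mul_pos (hdhpos i) hNpos) (inv_pos.2 (hdhpos j0))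
  exact ⟨hposF, hzero, fun c hc => by rw [hzero c hc]; exact hposF⟩
end

section
/- For λ > 0, define Q : ℝ^{n×K} → ℝ by Q(F) = Σ_{i=1}^n ‖f_i − y_i‖² + λ Σ_{i,j=1}^n A_{ij} ‖f_i/√d_i − f_j/√d_j‖², where f_i denotes the i-th row of F and y_i denotes the i-th row of Y, and ‖·‖ is the Euclidean norm on ℝ^K. Then Q has a unique global minimizer, equal to (1/(1+2λ)) (I − αS)^{-1} Y with α := 2λ/(2λ+1). In particular, the minimizer is a positive scalar multiple of (I − αS)^{-1} Y, so its row-wise argmaxes coincide with those of (I − αS)^{-1} Y. -/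
open Matrix BigOperators Finset

attribute [local instance] Classical.propDecidable

/-!
Write `s_i = √d_i`. For every column `v` of `F`, symmetry of `A` and `s_i² = d_i` give
`Σ_{i,j} A_{ij} (v_i/s_i - v_j/s_j)² = 2 (v ⬝ v - v ⬝ S v)`, so `Q` splits over the columns of `F`
into quadratics `‖v - y‖² + 2λ (v ⬝ v - v ⬝ S v)`. Around a solution `v₀` of the critical point
equation `v₀ + 2λ (v₀ - S v₀) = y`, i.e. `(1 + 2λ) (I - αS) v₀ = y`, the cross terms cancel and
`q(v₀ + h) = q(v₀) + ‖h‖² + λ Σ_{i,j} A_{ij} (h_i/s_i - h_j/s_j)² > q(v₀)` for `h ≠ 0`.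
Nonnegativity of the same energy gives `v ⬝ S v ≤ v ⬝ v`, so `I - αS` has trivial kernel for
`0 ≤ α < 1` and `F₀` does solve the critical point equation.
-/

open Real

section

variable {n : ℕ} {A : Matrix (Fin n) (Fin n) ℝ}

lemma smat_apply (i j : Fin n) :
    Smat A i j = A i j / (√(rowSum A i) * √(rowSum A j)) := by
  simp [Smat, Matrix.mul_diagonal, Matrix.diagonal_mul, div_eq_mul_inv]
  ring

lemma isSymm_smat (hsym : A.IsSymm) : (Smat A).IsSymm :=
  IsSymm.ext fun i j => by rw [smat_apply, smat_apply, hsym.apply, mul_comm]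

lemma dotProduct_smat_mulVec_comm (hsym : A.IsSymm) (v w : Fin n → ℝ) :
    v ⬝ᵥ (Smat A *ᵥ w) = w ⬝ᵥ (Smat A *ᵥ v) := by
  rw [dotProduct_mulVec, ← mulVec_transpose, (isSymm_smat hsym).eq, dotProduct_comm]

noncomputable def normalizedDirichletEnergy (A : Matrix (Fin n) (Fin n) ℝ) (v : Fin n → ℝ) : ℝ :=
  ∑ i, ∑ j, A i j * (v i / √(rowSum A i) - v j / √(rowSum A j)) ^ 2

lemma normalizedDirichletEnergy_nonneg (hnonneg : ∀ i j, 0 ≤ A i j) (v : Fin n → ℝ) :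
    0 ≤ normalizedDirichletEnergy A v :=
  sum_nonneg fun i _ => sum_nonneg fun j _ => mul_nonneg (hnonneg i j) (sq_nonneg _)

lemma normalizedDirichletEnergy_eq (hsym : A.IsSymm) (hrow : ∀ i, 0 < rowSum A i)
    (v : Fin n → ℝ) :
    normalizedDirichletEnergy A v = 2 * (v ⬝ᵥ v - v ⬝ᵥ (Smat A *ᵥ v)) := by
  have hcross : ∑ i, ∑ j, A i j * (v i / √(rowSum A i) * (v j / √(rowSum A j)))
      = v ⬝ᵥ (Smat A *ᵥ v) := by
    simp only [dotProduct, mulVec, mul_sum, smat_apply]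
    refine sum_congr rfl fun i _ => sum_congr rfl fun j _ => ?_
    field_simp [(sqrt_pos.2 (hrow i)).ne', (sqrt_pos.2 (hrow j)).ne']
  have hleft : ∑ i, ∑ j, A i j * (v i / √(rowSum A i)) ^ 2 = v ⬝ᵥ v := by
    refine sum_congr rfl fun i _ => ?_
    rw [← sum_mul, ← rowSum, div_pow, sq_sqrt (hrow i).le]
    field_simp [(hrow i).ne']
  have hright : ∑ i, ∑ j, A i j * (v j / √(rowSum A j)) ^ 2 = v ⬝ᵥ v := by
    rw [sum_comm, ← hleft]
    simp_rw [hsym.apply]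
  calc normalizedDirichletEnergy A v
      = ∑ i, ∑ j, A i j * (v i / √(rowSum A i)) ^ 2 + ∑ i, ∑ j, A i j * (v j / √(rowSum A j)) ^ 2
          - 2 * ∑ i, ∑ j, A i j * (v i / √(rowSum A i) * (v j / √(rowSum A j))) := by
        simp only [normalizedDirichletEnergy, mul_sum, ← sum_add_distrib, ← sum_sub_distrib]
        refine sum_congr rfl fun i _ => sum_congr rfl fun j _ => ?_
        ring
    _ = 2 * (v ⬝ᵥ v - v ⬝ᵥ (Smat A *ᵥ v)) := by rw [hleft, hright, hcross]; ring

lemma dotProduct_smat_mulVec_le (hsym : A.IsSymm) (hnonneg : ∀ i j, 0 ≤ A i j)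
    (hrow : ∀ i, 0 < rowSum A i) (v : Fin n → ℝ) : v ⬝ᵥ (Smat A *ᵥ v) ≤ v ⬝ᵥ v := by
  have := normalizedDirichletEnergy_nonneg hnonneg v
  rw [normalizedDirichletEnergy_eq hsym hrow] at this
  linarith

lemma isUnit_det_one_sub_smul_smat (hsym : A.IsSymm) (hnonneg : ∀ i j, 0 ≤ A i j)
    (hrow : ∀ i, 0 < rowSum A i) {α : ℝ} (hα₀ : 0 ≤ α) (hα₁ : α < 1) :
    IsUnit (1 - α • Smat A).det := by
  refine isUnit_iff_ne_zero.2 fun hdet => ?_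
  obtain ⟨v, hv, hker⟩ := exists_mulVec_eq_zero_iff.2 hdet
  have hfix : v = α • (Smat A *ᵥ v) := by
    rwa [sub_mulVec, one_mulVec, smul_mulVec, sub_eq_zero] at hker
  have hle : v ⬝ᵥ v ≤ α * (v ⬝ᵥ v) := by
    calc v ⬝ᵥ v = v ⬝ᵥ (α • (Smat A *ᵥ v)) := congrArg (v ⬝ᵥ ·) hfix
      _ = α * (v ⬝ᵥ (Smat A *ᵥ v)) := by rw [dotProduct_smul, smul_eq_mul]
      _ ≤ α * (v ⬝ᵥ v) :=
        mul_le_mul_of_nonneg_left (dotProduct_smat_mulVec_le hsym hnonneg hrow v) hα₀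
  have hpos : 0 < v ⬝ᵥ v := by simpa using dotProduct_self_star_pos_iff.2 hv
  nlinarith

noncomputable def lpObjective (A : Matrix (Fin n) (Fin n) ℝ) (lam : ℝ) (y v : Fin n → ℝ) : ℝ :=
  (v - y) ⬝ᵥ (v - y) + lam * normalizedDirichletEnergy A v

lemma lpObjective_add (hsym : A.IsSymm) (hrow : ∀ i, 0 < rowSum A i) {lam : ℝ}
    {y v₀ : Fin n → ℝ} (hv₀ : v₀ + (2 * lam) • (v₀ - Smat A *ᵥ v₀) = y) (h : Fin n → ℝ) :
    lpObjective A lam y (v₀ + h) =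
      lpObjective A lam y v₀ + h ⬝ᵥ h + lam * normalizedDirichletEnergy A h := by
  have hstat := congrArg (h ⬝ᵥ ·) hv₀
  simp only [dotProduct_add, dotProduct_smul, dotProduct_sub, smul_eq_mul] at hstat
  simp only [lpObjective, normalizedDirichletEnergy_eq hsym hrow, mulVec_add, add_dotProduct,
    dotProduct_add, sub_dotProduct, dotProduct_sub, add_sub_right_comm v₀ h y,
    dotProduct_smat_mulVec_comm hsym v₀ h, dotProduct_comm v₀ h, dotProduct_comm y h]
  linear_combination 2 * hstat

lemma lpObjective_lt_of_ne (hsym : A.IsSymm) (hnonneg : ∀ i j, 0 ≤ A i j)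
    (hrow : ∀ i, 0 < rowSum A i) {lam : ℝ} (hlam : 0 ≤ lam) {y v₀ v : Fin n → ℝ}
    (hv₀ : v₀ + (2 * lam) • (v₀ - Smat A *ᵥ v₀) = y) (hv : v ≠ v₀) :
    lpObjective A lam y v₀ < lpObjective A lam y v := by
  have hexp := lpObjective_add hsym hrow hv₀ (v - v₀)
  rw [add_sub_cancel] at hexp
  have hpos : 0 < (v - v₀) ⬝ᵥ (v - v₀) := by
    simpa using dotProduct_self_star_pos_iff.2 (sub_ne_zero.2 hv)
  have := mul_nonneg hlam (normalizedDirichletEnergy_nonneg hnonneg (v - v₀))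
  linarith

lemma lpObjective_le (hsym : A.IsSymm) (hnonneg : ∀ i j, 0 ≤ A i j)
    (hrow : ∀ i, 0 < rowSum A i) {lam : ℝ} (hlam : 0 ≤ lam) {y v₀ : Fin n → ℝ}
    (hv₀ : v₀ + (2 * lam) • (v₀ - Smat A *ᵥ v₀) = y) (v : Fin n → ℝ) :
    lpObjective A lam y v₀ ≤ lpObjective A lam y v := by
  rcases eq_or_ne v v₀ with rfl | hv
  · rfl
  · exact (lpObjective_lt_of_ne hsym hnonneg hrow hlam hv₀ hv).le

lemma sum_lpObjective_transpose {K : ℕ} (lam : ℝ) (Y F : Matrix (Fin n) (Fin K) ℝ) :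
    ∑ c, lpObjective A lam (Yᵀ c) (Fᵀ c) = (∑ i, ∑ c, (F i c - Y i c) ^ 2) +
      lam * ∑ i, ∑ j, A i j *
        ∑ c, (F i c / √(rowSum A i) - F j c / √(rowSum A j)) ^ 2 := by
  simp only [lpObjective, normalizedDirichletEnergy, dotProduct, sum_add_distrib, mul_sum,
    transpose_apply, Pi.sub_apply, sq]
  congr 1
  · exact sum_comm
  · rw [sum_comm]
    exact sum_congr rfl fun i _ => sum_comm

end

theorem lp_objective_minimizer_general
    {n K : ℕ} (l : ℕ)
    (y : Fin n → Fin K)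
    (A : Matrix (Fin n) (Fin n) ℝ)
    (hsym : A.IsSymm) (hnonneg : ∀ i j, 0 ≤ A i j)
    (hrow : ∀ i, 0 < rowSum A i)
    (lam : ℝ) (hlam : 0 < lam)
    (Q : Matrix (Fin n) (Fin K) ℝ → ℝ)
    (hQ : ∀ F : Matrix (Fin n) (Fin K) ℝ,
      Q F = (∑ i, ∑ c, (F i c - Ymat l y i c) ^ 2) +
        lam * ∑ i, ∑ j, A i j *
          ∑ c, (F i c / Real.sqrt (rowSum A i) - F j c / Real.sqrt (rowSum A j)) ^ 2)
    (α : ℝ) (hαdef : α = 2 * lam / (2 * lam + 1))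
    (F₀ : Matrix (Fin n) (Fin K) ℝ)
    (hF₀ : F₀ = (1 / (1 + 2 * lam)) • ((1 - α • Smat A)⁻¹ * Ymat l y)) :
    (∀ F : Matrix (Fin n) (Fin K) ℝ, F ≠ F₀ → Q F₀ < Q F) ∧
      (∀ (i : Fin n) (c c' : Fin K),
        (F₀ i c < F₀ i c' ↔
          ((1 - α • Smat A)⁻¹ * Ymat l y) i c < ((1 - α • Smat A)⁻¹ * Ymat l y) i c')) := by
  have hα₀ : 0 ≤ α := by rw [hαdef]; positivity
  have hα₁ : α < 1 := by rw [hαdef, div_lt_one (by positivity)]; linarith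
  have hMF₀ : (1 - α • Smat A) * F₀ = (1 / (1 + 2 * lam)) • Ymat l y := by
    rw [hF₀, Matrix.mul_smul, ← Matrix.mul_assoc,
      mul_nonsing_inv _ (isUnit_det_one_sub_smul_smat hsym hnonneg hrow hα₀ hα₁), Matrix.one_mul]
  have hscale : (1 + 2 * lam) * α = 2 * lam := by rw [hαdef]; field_simp; ring
  have hstat : F₀ + (2 * lam) • (F₀ - Smat A * F₀) = Ymat l y := by
    calc F₀ + (2 * lam) • (F₀ - Smat A * F₀) = (1 + 2 * lam) • ((1 - α • Smat A) * F₀) := by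
          rw [Matrix.sub_mul, Matrix.one_mul, Matrix.smul_mul]
          linear_combination (norm := module) hscale • (Smat A * F₀)
      _ = Ymat l y := by rw [hMF₀, smul_smul, mul_one_div_cancel (by positivity), one_smul]
  have hcol : ∀ c, F₀ᵀ c + (2 * lam) • (F₀ᵀ c - Smat A *ᵥ F₀ᵀ c) = (Ymat l y)ᵀ c :=
    fun c => funext fun i => congrFun (congrFun hstat i) c
  refine ⟨fun F hF => ?_, fun i c c' => ?_⟩
  · obtain ⟨c, hc⟩ : ∃ c, Fᵀ c ≠ F₀ᵀ c := by
      contrapose! hF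
      exact transpose_inj.1 (funext hF)
    rw [hQ, hQ, ← sum_lpObjective_transpose, ← sum_lpObjective_transpose]
    exact sum_lt_sum (fun c _ => lpObjective_le hsym hnonneg hrow hlam.le (hcol c) _)
      ⟨c, mem_univ c, lpObjective_lt_of_ne hsym hnonneg hrow hlam.le (hcol c) hc⟩
  · rw [hF₀]
    simp only [Matrix.smul_apply, smul_eq_mul]
    exact mul_lt_mul_iff_right₀ (by positivity)

/-- for `λ > 0`, the objective
`Q(F) = Σ_i ‖f_i - y_i‖² + λ Σ_{i,j} A_{ij} ‖f_i/√d_i - f_j/√d_j‖²`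
has a unique global minimizer `(1/(1+2λ)) (I - αS)⁻¹ Y` with `α = 2λ/(2λ+1)`;
being a positive multiple of `(I - αS)⁻¹ Y`, its row-wise comparisons (hence
argmaxes) coincide with those of `(I - αS)⁻¹ Y`. -/
theorem lp_objective_minimizer
    {n K : ℕ} (l : ℕ) (hl : 0 < l) (hln : l < n) (hK : 0 < K)
    (y : Fin n → Fin K)
    (A : Matrix (Fin n) (Fin n) ℝ)
    (hsym : A.IsSymm) (hnonneg : ∀ i j, 0 ≤ A i j) (hdiag : ∀ i, A i i = 0)
    (hrow : ∀ i, 0 < rowSum A i)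
    (lam : ℝ) (hlam : 0 < lam)
    (Q : Matrix (Fin n) (Fin K) ℝ → ℝ)
    (hQ : ∀ F : Matrix (Fin n) (Fin K) ℝ,
      Q F = (∑ i, ∑ c, (F i c - Ymat l y i c) ^ 2) +
        lam * ∑ i, ∑ j, A i j *
          ∑ c, (F i c / Real.sqrt (rowSum A i) - F j c / Real.sqrt (rowSum A j)) ^ 2)
    (α : ℝ) (hαdef : α = 2 * lam / (2 * lam + 1))
    (F₀ : Matrix (Fin n) (Fin K) ℝ)
    (hF₀ : F₀ = (1 / (1 + 2 * lam)) • ((1 - α • Smat A)⁻¹ * Ymat l y)) :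
    (∀ F : Matrix (Fin n) (Fin K) ℝ, F ≠ F₀ → Q F₀ < Q F) ∧
      (∀ (i : Fin n) (c c' : Fin K),
        (F₀ i c < F₀ i c' ↔
          ((1 - α • Smat A)⁻¹ * Ymat l y) i c < ((1 - α • Smat A)⁻¹ * Ymat l y) i c')) :=
  lp_objective_minimizer_general l y A hsym hnonneg hrow lam hlam Q hQ α hαdef F₀ hF₀
end
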